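/- arXiv:1604.04423 — 4 statements merged into one kernel-verified Lean document; each statement's English description precedes it below -/
import Mathlib

section
/- For all natural numbers n ≥ 1 and r ≥ 1 there exists a constant C > 0 such that for all n-tuples g, h, X of real polynomials in n variables, each component having total degree at most r and zero constant coefficient, and with ⫴X⫴ ≤ 1, one has ⫴g ∘ X ∘ h⫴ ≤ C · max(1, ⫴g⫴) · max(1, ⫴h⫴)^(r²). -/
open MvPolynomial

/-- The coefficient norm of an `n`-tuple of real polynomials in `n` variables:
the supremum (= maximum) of the absolute values of all monomial coefficients
of all components. -/
noncomputable def coeffNorm {n : ℕ} (P : Fin n → MvPolynomial (Fin n) ℝ) : ℝ :=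
  ⨆ i : Fin n, ⨆ d : Fin n →₀ ℕ, |MvPolynomial.coeff d (P i)|

/-- The composition `Y ∘ X` of `n`-tuples of polynomials: substitute the
components of `X` for the variables in each component of `Y`. -/
noncomputable def polyComp {n : ℕ} (Y X : Fin n → MvPolynomial (Fin n) ℝ) :
    Fin n → MvPolynomial (Fin n) ℝ :=
  fun i => MvPolynomial.bind₁ X (Y i)

/-! The `ℓ¹` norm of the coefficients is submultiplicative, so substituting polynomials of
`ℓ¹` norm at most `A ≥ 1` into a polynomial of degree at most `D` multiplies its `ℓ¹` norm by at
most `A ^ D`. In `n` variables there are only `N` monomials of degree at most `r`, so for such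
polynomials the `ℓ¹` norm is at most `N` times the largest coefficient. Applying the substitution
bound to `g ∘ X` (of degree at most `r²`) and then to `(g ∘ X) ∘ h` gives the claim with
`C = N ^ (r + 1 + r²)`. -/

namespace MvPolynomial

section L1Norm

variable {σ τ R : Type*} [NormedCommRing R]

noncomputable def l1Norm (p : MvPolynomial σ R) : ℝ :=
  ∑ d ∈ p.support, ‖coeff d p‖

theorem l1Norm_nonneg (p : MvPolynomial σ R) : 0 ≤ l1Norm p :=
  Finset.sum_nonneg fun _ _ => norm_nonneg _

theorem l1Norm_eq_sum_of_support_subset {p : MvPolynomial σ R} {s : Finset (σ →₀ ℕ)}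
    (hs : p.support ⊆ s) : l1Norm p = ∑ d ∈ s, ‖coeff d p‖ :=
  Finset.sum_subset hs fun d _ hd => by rw [notMem_support_iff.mp hd, norm_zero]

theorem norm_coeff_le_l1Norm (p : MvPolynomial σ R) (d : σ →₀ ℕ) : ‖coeff d p‖ ≤ l1Norm p := by
  by_cases hd : d ∈ p.support
  · exact Finset.single_le_sum (f := fun e => ‖coeff e p‖) (fun _ _ => norm_nonneg _) hd
  · rw [notMem_support_iff.mp hd, norm_zero]
    exact l1Norm_nonneg p

theorem l1Norm_add_le (p q : MvPolynomial σ R) : l1Norm (p + q) ≤ l1Norm p + l1Norm q := by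
  classical
  rw [l1Norm_eq_sum_of_support_subset support_add,
    l1Norm_eq_sum_of_support_subset (Finset.subset_union_left (s₂ := q.support)),
    l1Norm_eq_sum_of_support_subset (Finset.subset_union_right (s₁ := p.support)),
    ← Finset.sum_add_distrib]
  exact Finset.sum_le_sum fun d _ => by rw [coeff_add]; exact norm_add_le _ _

theorem l1Norm_sum_le {ι : Type*} (s : Finset ι) (f : ι → MvPolynomial σ R) :
    l1Norm (∑ i ∈ s, f i) ≤ ∑ i ∈ s, l1Norm (f i) :=
  Finset.le_sum_of_subadditive l1Norm (by simp [l1Norm]) l1Norm_add_le s f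

theorem l1Norm_monomial (d : σ →₀ ℕ) (c : R) : l1Norm (monomial d c) = ‖c‖ := by
  classical
  by_cases hc : c = 0
  · simp [hc, l1Norm]
  · rw [l1Norm, support_monomial, if_neg hc, Finset.sum_singleton, coeff_monomial, if_pos rfl]

theorem l1Norm_mul_le (p q : MvPolynomial σ R) : l1Norm (p * q) ≤ l1Norm p * l1Norm q := by
  classical
  calc l1Norm (p * q)
      = l1Norm (∑ d ∈ p.support, ∑ e ∈ q.support, monomial (d + e) (coeff d p * coeff e q)) := by
        conv_lhs => rw [p.as_sum, q.as_sum, Finset.sum_mul_sum]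
        simp_rw [monomial_mul]
    _ ≤ ∑ d ∈ p.support, ∑ e ∈ q.support, ‖coeff d p * coeff e q‖ :=
        (l1Norm_sum_le _ _).trans <| Finset.sum_le_sum fun d _ =>
          (l1Norm_sum_le _ _).trans (Finset.sum_le_sum fun e _ => (l1Norm_monomial _ _).le)
    _ ≤ l1Norm p * l1Norm q := by
        rw [l1Norm, l1Norm, Finset.sum_mul_sum]
        exact Finset.sum_le_sum fun d _ => Finset.sum_le_sum fun e _ => norm_mul_le _ _

theorem l1Norm_le_ncard_mul [Finite σ] {p : MvPolynomial σ R} {r : ℕ} (hp : p.totalDegree ≤ r)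
    {B : ℝ} (hB : ∀ d, ‖coeff d p‖ ≤ B) :
    l1Norm p ≤ {d : σ →₀ ℕ | d.degree ≤ r}.ncard * B := by
  have hsupp : (p.support : Set (σ →₀ ℕ)) ⊆ {d | d.degree ≤ r} := fun d hd =>
    (le_totalDegree hd).trans hp
  calc l1Norm p ≤ ∑ _d ∈ p.support, B := Finset.sum_le_sum fun d _ => hB d
    _ = p.support.card * B := by rw [Finset.sum_const, nsmul_eq_mul]
    _ ≤ {d : σ →₀ ℕ | d.degree ≤ r}.ncard * B := by
      gcongr
      · exact (norm_nonneg _).trans (hB 0)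
      · rw [← Set.ncard_coe_finset]
        exact Set.ncard_le_ncard hsupp (Finsupp.finite_of_degree_le r)

variable [NormOneClass R]

theorem l1Norm_one_le : l1Norm (1 : MvPolynomial σ R) ≤ 1 := by
  rw [← C_1, ← monomial_zero', l1Norm_monomial, norm_one]

theorem l1Norm_prod_le {ι : Type*} (s : Finset ι) (f : ι → MvPolynomial σ R) :
    l1Norm (∏ i ∈ s, f i) ≤ ∏ i ∈ s, l1Norm (f i) :=
  Finset.le_prod_of_submultiplicative_of_nonneg l1Norm l1Norm_nonneg l1Norm_one_le
    l1Norm_mul_le s f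

theorem l1Norm_pow_le (p : MvPolynomial σ R) (k : ℕ) : l1Norm (p ^ k) ≤ l1Norm p ^ k := by
  simpa using l1Norm_prod_le (Finset.range k) fun _ => p

theorem l1Norm_bind₁_monomial_le {X : σ → MvPolynomial τ R} {A : ℝ}
    (hX : ∀ i, l1Norm (X i) ≤ A) (d : σ →₀ ℕ) (c : R) :
    l1Norm (bind₁ X (monomial d c)) ≤ ‖c‖ * A ^ d.degree := by
  rw [bind₁_monomial, Finsupp.degree_apply, ← Finset.prod_pow_eq_pow_sum, ← monomial_zero']
  refine (l1Norm_mul_le _ _).trans ?_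
  rw [l1Norm_monomial]
  gcongr
  refine (l1Norm_prod_le _ _).trans <|
    Finset.prod_le_prod (fun _ _ => l1Norm_nonneg _) fun i _ => ?_
  exact (l1Norm_pow_le _ _).trans (pow_le_pow_left₀ (l1Norm_nonneg _) (hX i) _)

theorem l1Norm_bind₁_le {X : σ → MvPolynomial τ R} {A : ℝ} (hA : 1 ≤ A)
    (hX : ∀ i, l1Norm (X i) ≤ A) {p : MvPolynomial σ R} {D : ℕ} (hp : p.totalDegree ≤ D) :
    l1Norm (bind₁ X p) ≤ l1Norm p * A ^ D := by
  conv_lhs => rw [p.as_sum, map_sum]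
  refine (l1Norm_sum_le _ _).trans ?_
  rw [l1Norm, Finset.sum_mul]
  refine Finset.sum_le_sum fun d hd => (l1Norm_bind₁_monomial_le hX d _).trans ?_
  gcongr
  exact (le_totalDegree hd).trans hp

end L1Norm

section TotalDegree

variable {σ τ R : Type*} [CommSemiring R]

theorem totalDegree_bind₁_monomial_le {X : σ → MvPolynomial τ R} {r : ℕ}
    (hX : ∀ i, (X i).totalDegree ≤ r) (d : σ →₀ ℕ) (c : R) :
    (bind₁ X (monomial d c)).totalDegree ≤ d.degree * r := by
  rw [bind₁_monomial, Finsupp.degree_apply, Finset.sum_mul]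
  refine (totalDegree_mul _ _).trans ?_
  rw [totalDegree_C, zero_add]
  refine (totalDegree_finsetProd _ _).trans <| Finset.sum_le_sum fun i _ => ?_
  exact (totalDegree_pow _ _).trans (Nat.mul_le_mul_left _ (hX i))

theorem totalDegree_bind₁_le {X : σ → MvPolynomial τ R} {r : ℕ}
    (hX : ∀ i, (X i).totalDegree ≤ r) {p : MvPolynomial σ R} {D : ℕ} (hp : p.totalDegree ≤ D) :
    (bind₁ X p).totalDegree ≤ D * r := by
  conv_lhs => rw [p.as_sum, map_sum]
  refine (totalDegree_finsetSum _ _).trans <| Finset.sup_le fun d hd => ?_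
  refine (totalDegree_bind₁_monomial_le hX d _).trans ?_
  gcongr
  exact (le_totalDegree hd).trans hp

end TotalDegree

end MvPolynomial

theorem abs_coeff_le_coeffNorm {n : ℕ} (P : Fin n → MvPolynomial (Fin n) ℝ) (i : Fin n)
    (d : Fin n →₀ ℕ) : |coeff d (P i)| ≤ coeffNorm P := by
  have hbdd : ∀ j, BddAbove (Set.range fun e : Fin n →₀ ℕ => |coeff e (P j)|) := fun j =>
    ⟨l1Norm (P j), by rintro _ ⟨e, rfl⟩; exact norm_coeff_le_l1Norm (P j) e⟩
  exact (le_ciSup (hbdd i) d).trans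
    (le_ciSup (f := fun j => ⨆ e, |coeff e (P j)|) (Set.finite_range _).bddAbove i)

theorem coeffNorm_le {n : ℕ} {P : Fin n → MvPolynomial (Fin n) ℝ} {B : ℝ} (hB : 0 ≤ B)
    (h : ∀ i d, |coeff d (P i)| ≤ B) : coeffNorm P ≤ B :=
  Real.iSup_le (fun i => Real.iSup_le (h i) hB) hB

theorem coeffNorm_triple_comp_le_general (n r : ℕ) :
    ∃ C : ℝ, 0 < C ∧
      ∀ g h X : Fin n → MvPolynomial (Fin n) ℝ,
        (∀ i, (g i).totalDegree ≤ r) → (∀ i, MvPolynomial.constantCoeff (g i) = 0) →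
        (∀ i, (h i).totalDegree ≤ r) → (∀ i, MvPolynomial.constantCoeff (h i) = 0) →
        (∀ i, (X i).totalDegree ≤ r) → (∀ i, MvPolynomial.constantCoeff (X i) = 0) →
        coeffNorm X ≤ 1 →
        coeffNorm (polyComp (polyComp g X) h) ≤
          C * max 1 (coeffNorm g) * max 1 (coeffNorm h) ^ (r ^ 2) := by
  set N : ℝ := (({d : Fin n →₀ ℕ | d.degree ≤ r}.ncard : ℕ) : ℝ)
  have hN : 1 ≤ N := by
    refine Nat.one_le_cast.mpr <| (Set.ncard_pos (Finsupp.finite_of_degree_le r)).mpr ⟨0, ?_⟩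
    simp
  have l1Norm_le : ∀ P : Fin n → MvPolynomial (Fin n) ℝ, (∀ i, (P i).totalDegree ≤ r) →
      ∀ i, l1Norm (P i) ≤ N * max 1 (coeffNorm P) := fun P hP i =>
    l1Norm_le_ncard_mul (hP i) fun d => (abs_coeff_le_coeffNorm P i d).trans (le_max_right _ _)
  refine ⟨N ^ (r + 1) * N ^ (r ^ 2), by positivity, fun g h X hg _ hh _ hX _ hX1 => ?_⟩
  have hXl1 : ∀ i, l1Norm (X i) ≤ N := by simpa [max_eq_left hX1] using l1Norm_le X hX
  have hh1 : 1 ≤ N * max 1 (coeffNorm h) := one_le_mul_of_one_le_of_one_le hN (le_max_left _ _)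
  refine coeffNorm_le (by positivity) fun i d => ?_
  calc |coeff d (polyComp (polyComp g X) h i)| ≤ l1Norm (polyComp (polyComp g X) h i) :=
        norm_coeff_le_l1Norm (polyComp (polyComp g X) h i) d
    _ ≤ l1Norm (polyComp g X i) * (N * max 1 (coeffNorm h)) ^ (r ^ 2) :=
        l1Norm_bind₁_le hh1 (l1Norm_le h hh) (sq r ▸ totalDegree_bind₁_le hX (hg i))
    _ ≤ N * max 1 (coeffNorm g) * N ^ r * (N * max 1 (coeffNorm h)) ^ (r ^ 2) := by
        gcongr
        exact (l1Norm_bind₁_le hN hXl1 (hg i)).trans (by gcongr; exact l1Norm_le g hg i)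
    _ = N ^ (r + 1) * N ^ (r ^ 2) * max 1 (coeffNorm g) * max 1 (coeffNorm h) ^ (r ^ 2) := by
        ring

/-- For `n ≥ 1`, `r ≥ 1` there is `C > 0` such that for all `n`-tuples
`g`, `h`, `X` of real polynomials in `n` variables, each component of total degree at
most `r` with zero constant coefficient, and with `⫴X⫴ ≤ 1`, one has
`⫴g ∘ X ∘ h⫴ ≤ C · max(1,⫴g⫴) · max(1,⫴h⫴)^(r²)`. -/
theorem coeffNorm_triple_comp_le (n r : ℕ) (hn : 1 ≤ n) (hr : 1 ≤ r) :
    ∃ C : ℝ, 0 < C ∧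
      ∀ g h X : Fin n → MvPolynomial (Fin n) ℝ,
        (∀ i, (g i).totalDegree ≤ r) → (∀ i, MvPolynomial.constantCoeff (g i) = 0) →
        (∀ i, (h i).totalDegree ≤ r) → (∀ i, MvPolynomial.constantCoeff (h i) = 0) →
        (∀ i, (X i).totalDegree ≤ r) → (∀ i, MvPolynomial.constantCoeff (X i) = 0) →
        coeffNorm X ≤ 1 →
        coeffNorm (polyComp (polyComp g X) h) ≤
          C * max 1 (coeffNorm g) * max 1 (coeffNorm h) ^ (r ^ 2) :=
  coeffNorm_triple_comp_le_general n r
end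

section
/- Every subresonance polynomial self-map P of ℝ^n whose derivative at the origin (equivalently, whose linear part) is an invertible linear map is a bijection of ℝ^n, and its inverse is again (induced by) a subresonance polynomial self-map of ℝ^n. -/
open MvPolynomial

/-- The defect of the monomial with exponent multi-index `d` occurring in the
`i`-th component: `w i − Σ_j (d j)·(w j)`. -/
noncomputable def defect {n : ℕ} (w : Fin n → ℝ) (i : Fin n) (d : Fin n →₀ ℕ) : ℝ :=
  w i - ∑ j, (d j : ℝ) * w j

/-- An `n`-tuple of polynomials with zero constant coefficients
(a polynomial self-map of `ℝ^n`). -/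
def IsPolySelfMap {n : ℕ} (P : Fin n → MvPolynomial (Fin n) ℝ) : Prop :=
  ∀ i, MvPolynomial.constantCoeff (P i) = 0

/-- `P` is subresonance: every monomial occurring with nonzero coefficient in
each component has defect `≤ 0`. -/
def SubresonanceDefects {n : ℕ} (w : Fin n → ℝ)
    (P : Fin n → MvPolynomial (Fin n) ℝ) : Prop :=
  ∀ i, ∀ d ∈ (P i).support, defect w i d ≤ 0

/-- The map `ℝ^n → ℝ^n` induced by an `n`-tuple of polynomials. -/
noncomputable def evalMap {n : ℕ} (P : Fin n → MvPolynomial (Fin n) ℝ)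
    (x : Fin n → ℝ) : Fin n → ℝ :=
  fun i => MvPolynomial.eval x (P i)

/-- The linear part (derivative at the origin) of a polynomial self-map,
as an `n × n` matrix. -/
noncomputable def linPart {n : ℕ} (P : Fin n → MvPolynomial (Fin n) ℝ) :
    Matrix (Fin n) (Fin n) ℝ :=
  Matrix.of fun i j => MvPolynomial.coeff (Finsupp.single j 1) (P i)

/-!
Substituting `P` into polynomials, `f ↦ f(P) = bind₁ P f`, preserves for every `c` the space of
polynomials whose monomials all have `w`-weight at least `c`; subresonance of `P` says exactly that
`P i` lies in this space for `c = w i`, and the space is finite-dimensional because all weights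
are negative. Substitution is injective when the linear part of `P` is invertible: after
normalising the linear part to the identity, `f(P) - f` has strictly larger order than `f`.
An injective endomorphism of a finite-dimensional space is onto, so `X i = Q i (P)` with `Q i`
of weight at least `w i`, and injectivity turns this left inverse into a two-sided one.
-/

theorem Finsupp.finite_setOf_le_weight_of_neg {σ : Type*} [Finite σ] {w : σ → ℝ}
    (hw : ∀ j, w j < 0) (c : ℝ) : {d : σ →₀ ℕ | c ≤ Finsupp.weight w d}.Finite := by
  classical
  have := Fintype.ofFinite σ
  refine (Set.finite_Iic (Finsupp.equivFunOnFinite.symm fun j => ⌊c / w j⌋₊)).subset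
    fun d hd j => ?_
  have hle : Finsupp.weight w d ≤ d j * w j := by
    rw [Finsupp.weight_eq_sum, ← Finset.add_sum_erase _ _ (Finset.mem_univ j), nsmul_eq_mul]
    exact add_le_of_nonpos_right
      (Finset.sum_nonpos fun i _ => nsmul_nonpos (hw i).le _)
  simpa using Nat.le_floor ((le_div_iff_of_neg (hw j)).2 (hd.trans hle))

namespace MvPolynomial

section WeightAtLeast

variable {σ τ ι R M : Type*} [CommSemiring R] [AddCommMonoid M] [PartialOrder M]

variable (R) in
noncomputable def weightAtLeast (u : σ → M) (c : M) : Submodule R (MvPolynomial σ R) :=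
  restrictSupport R {d | c ≤ Finsupp.weight u d}

variable {u : σ → M} {c c' : M}

theorem mem_weightAtLeast {f : MvPolynomial σ R} :
    f ∈ weightAtLeast R u c ↔ ∀ d ∈ f.support, c ≤ Finsupp.weight u d := by
  simp [weightAtLeast, mem_restrictSupport_iff, Set.subset_def]

theorem weightAtLeast_anti (h : c' ≤ c) : weightAtLeast R u c ≤ weightAtLeast R u c' :=
  restrictSupport_mono R fun _ hd => h.trans hd

theorem IsWeightedHomogeneous.mem_weightAtLeast {f : MvPolynomial σ R}
    (hf : IsWeightedHomogeneous u f c) : f ∈ weightAtLeast R u c :=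
  MvPolynomial.mem_weightAtLeast.2 fun _ hd => (hf (mem_support_iff.1 hd)).ge

theorem X_mem_weightAtLeast (u : σ → M) (j : σ) : X j ∈ weightAtLeast R u (u j) :=
  (isWeightedHomogeneous_X R u j).mem_weightAtLeast

variable [IsOrderedAddMonoid M]

theorem mul_mem_weightAtLeast {f g : MvPolynomial σ R} (hf : f ∈ weightAtLeast R u c)
    (hg : g ∈ weightAtLeast R u c') : f * g ∈ weightAtLeast R u (c + c') := by
  classical
  refine mem_weightAtLeast.2 fun d hd => ?_
  obtain ⟨a, ha, b, hb, rfl⟩ := Finset.mem_add.1 (support_mul f g hd)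
  rw [map_add]
  exact add_le_add (mem_weightAtLeast.1 hf a ha) (mem_weightAtLeast.1 hg b hb)

theorem prod_mem_weightAtLeast (s : Finset ι) {F : ι → MvPolynomial σ R} {c : ι → M}
    (hF : ∀ i ∈ s, F i ∈ weightAtLeast R u (c i)) :
    ∏ i ∈ s, F i ∈ weightAtLeast R u (∑ i ∈ s, c i) := by
  classical
  induction s using Finset.induction_on with
  | empty => simpa using (isWeightedHomogeneous_one R u).mem_weightAtLeast
  | insert a s ha ih =>
    rw [Finset.prod_insert ha, Finset.sum_insert ha]
    exact mul_mem_weightAtLeast (hF a (s.mem_insert_self a))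
      (ih fun i hi => hF i (Finset.mem_insert_of_mem hi))

theorem pow_mem_weightAtLeast {f : MvPolynomial σ R} (hf : f ∈ weightAtLeast R u c) (m : ℕ) :
    f ^ m ∈ weightAtLeast R u (m • c) := by
  simpa using prod_mem_weightAtLeast (Finset.range m) fun _ _ => hf

theorem bind₁_mem_weightAtLeast {u : τ → M} {u' : σ → M} {Q : σ → MvPolynomial τ R}
    (hQ : ∀ j, Q j ∈ weightAtLeast R u (u' j)) {f : MvPolynomial σ R}
    (hf : f ∈ weightAtLeast R u' c) : bind₁ Q f ∈ weightAtLeast R u c := by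
  suffices weightAtLeast R u' c ≤ (weightAtLeast R u c).comap (bind₁ Q).toLinearMap from this hf
  rw [weightAtLeast, restrictSupport_eq_span, Submodule.span_le]
  rintro _ ⟨d, hd, rfl⟩
  simp only [SetLike.mem_coe, Submodule.mem_comap, AlgHom.toLinearMap_apply, bind₁_monomial,
    C_1, one_mul]
  rw [Set.mem_ofPred_eq, Finsupp.weight_apply] at hd
  exact weightAtLeast_anti hd (prod_mem_weightAtLeast _ fun i _ => pow_mem_weightAtLeast (hQ i) _)

end WeightAtLeast

section WeightAtLeastRing

variable {σ τ ι R M : Type*} [CommRing R] [AddCommMonoid M] [PartialOrder M]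
  [IsOrderedAddMonoid M] {u : σ → M} {c k : M}

theorem prod_sub_prod_mem_weightAtLeast (s : Finset ι) {F G : ι → MvPolynomial σ R}
    {c : ι → M} (hF : ∀ i ∈ s, F i ∈ weightAtLeast R u (c i))
    (hG : ∀ i ∈ s, G i ∈ weightAtLeast R u (c i))
    (hFG : ∀ i ∈ s, F i - G i ∈ weightAtLeast R u (c i + k)) :
    ∏ i ∈ s, F i - ∏ i ∈ s, G i ∈ weightAtLeast R u (∑ i ∈ s, c i + k) := by
  classical
  induction s using Finset.induction_on with
  | empty => simp
  | insert a s ha ih =>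
    have hs {P : ι → Prop} (h : ∀ i ∈ insert a s, P i) : ∀ i ∈ s, P i :=
      fun i hi => h i (Finset.mem_insert_of_mem hi)
    rw [Finset.prod_insert ha, Finset.prod_insert ha, Finset.sum_insert ha,
      show F a * ∏ i ∈ s, F i - G a * ∏ i ∈ s, G i
        = (F a - G a) * ∏ i ∈ s, F i + G a * (∏ i ∈ s, F i - ∏ i ∈ s, G i) by ring]
    refine add_mem ?_ ?_
    · rw [add_right_comm]
      exact mul_mem_weightAtLeast (hFG a (s.mem_insert_self a))
        (prod_mem_weightAtLeast s (hs hF))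
    · rw [add_assoc]
      exact mul_mem_weightAtLeast (hG a (s.mem_insert_self a)) (ih (hs hF) (hs hG) (hs hFG))

theorem pow_sub_pow_mem_weightAtLeast {f g : MvPolynomial σ R} (hf : f ∈ weightAtLeast R u c)
    (hg : g ∈ weightAtLeast R u c) (hfg : f - g ∈ weightAtLeast R u (c + k)) (m : ℕ) :
    f ^ m - g ^ m ∈ weightAtLeast R u (m • c + k) := by
  simpa using prod_sub_prod_mem_weightAtLeast (Finset.range m) (fun _ _ => hf) (fun _ _ => hg)
    (fun _ _ => hfg)

theorem bind₁_sub_bind₁_mem_weightAtLeast {u : τ → M} {u' : σ → M}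
    {Q Q' : σ → MvPolynomial τ R} (hQ : ∀ j, Q j ∈ weightAtLeast R u (u' j))
    (hQ' : ∀ j, Q' j ∈ weightAtLeast R u (u' j))
    (hQQ' : ∀ j, Q j - Q' j ∈ weightAtLeast R u (u' j + k)) {f : MvPolynomial σ R}
    (hf : f ∈ weightAtLeast R u' c) :
    bind₁ Q f - bind₁ Q' f ∈ weightAtLeast R u (c + k) := by
  suffices weightAtLeast R u' c ≤
      (weightAtLeast R u (c + k)).comap ((bind₁ Q).toLinearMap - (bind₁ Q').toLinearMap) from
    this hf
  rw [weightAtLeast, restrictSupport_eq_span, Submodule.span_le]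
  rintro _ ⟨d, hd, rfl⟩
  simp only [SetLike.mem_coe, Submodule.mem_comap, LinearMap.sub_apply,
    AlgHom.toLinearMap_apply, bind₁_monomial, C_1, one_mul]
  rw [Set.mem_ofPred_eq, Finsupp.weight_apply] at hd
  exact weightAtLeast_anti (add_le_add_left hd k) (prod_sub_prod_mem_weightAtLeast _
    (fun i _ => pow_mem_weightAtLeast (hQ i) _) (fun i _ => pow_mem_weightAtLeast (hQ' i) _)
    fun i _ => pow_sub_pow_mem_weightAtLeast (hQ i) (hQ' i) (hQQ' i) _)

end WeightAtLeastRing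

theorem bind₁_injective_of_sub_X_mem {σ R : Type*} [CommRing R] {Q : σ → MvPolynomial σ R}
    (hQ : ∀ j, Q j - X j ∈ weightAtLeast R (1 : σ → ℕ) 2) :
    Function.Injective (bind₁ Q) := by
  have hX (j : σ) : X j ∈ weightAtLeast R (1 : σ → ℕ) 1 := X_mem_weightAtLeast 1 j
  have hQ1 (j : σ) : Q j ∈ weightAtLeast R (1 : σ → ℕ) 1 := by
    simpa using add_mem (weightAtLeast_anti one_le_two (hQ j)) (hX j)
  refine (injective_iff_map_eq_zero (bind₁ Q)).2 fun f hf => ?_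
  by_contra hf0
  obtain ⟨d, hd, hmin⟩ :=
    f.support.exists_min_image (Finsupp.weight (1 : σ → ℕ)) (support_nonempty.2 hf0)
  -- `bind₁ Q f - f` has order above that of `f`, so it cannot be `-f`.
  have := bind₁_sub_bind₁_mem_weightAtLeast (k := 1) hQ1 hX hQ (mem_weightAtLeast.2 hmin)
  rw [hf, bind₁_X_left, AlgHom.id_apply, zero_sub, neg_mem_iff] at this
  exact (Nat.lt_succ_self _).not_ge (mem_weightAtLeast.1 this d hd)

theorem constantCoeff_bind₁ {σ R : Type*} [CommSemiring R]
    {P : σ → MvPolynomial σ R} (hP : ∀ j, constantCoeff (P j) = 0) (f : MvPolynomial σ R) :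
    constantCoeff (bind₁ P f) = constantCoeff f := by
  induction f using MvPolynomial.induction_on <;> simp_all

theorem bind₁_eq_X_of_injective {σ R : Type*} [CommSemiring R]
    {P Q : σ → MvPolynomial σ R} (hinj : Function.Injective (bind₁ P))
    (h : ∀ i, bind₁ P (Q i) = X i) (i : σ) : bind₁ Q (P i) = X i := by
  apply hinj
  rw [bind₁_bind₁, show (fun i => bind₁ P (Q i)) = X from _root_.funext h, bind₁_X_left,
    bind₁_X_right, AlgHom.id_apply]

theorem exists_bind₁_eq_of_injective {K σ : Type*} [Field K] [Finite σ]
    {w : σ → ℝ} (hw : ∀ j, w j < 0) {P : σ → MvPolynomial σ K}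
    (hP : ∀ j, P j ∈ weightAtLeast K w (w j)) (hinj : Function.Injective (bind₁ P)) {c : ℝ}
    {g : MvPolynomial σ K} (hg : g ∈ weightAtLeast K w c) :
    ∃ f ∈ weightAtLeast K w c, bind₁ P f = g := by
  have := (Finsupp.finite_setOf_le_weight_of_neg hw c).to_subtype
  have : Module.Finite K (weightAtLeast K w c) := .of_basis (basisRestrictSupport K _)
  let φ := (bind₁ P).toLinearMap.restrict fun f (hf : f ∈ weightAtLeast K w c) =>
    bind₁_mem_weightAtLeast hP hf
  have hφ : Function.Injective φ := fun _ _ h =>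
    Subtype.ext (hinj congr(($h : MvPolynomial σ K)))
  obtain ⟨⟨f, hf⟩, hfg⟩ := LinearMap.injective_iff_surjective.1 hφ ⟨g, hg⟩
  exact ⟨f, hf, congr(($hfg : MvPolynomial σ K))⟩

end MvPolynomial

theorem sub_toMvPolynomial_linPart_mem_weightAtLeast {n : ℕ}
    {P : Fin n → MvPolynomial (Fin n) ℝ} (hP0 : IsPolySelfMap P) (i : Fin n) :
    P i - (linPart P).toMvPolynomial i ∈ weightAtLeast ℝ (1 : Fin n → ℕ) 2 := by
  refine mem_weightAtLeast.2 fun d hd => ?_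
  by_contra! hlt
  rw [mem_support_iff] at hd
  apply hd
  have hdeg : d.degree < 2 := by rw [Finsupp.degree_eq_weight_one]; exact hlt
  interval_cases h : d.degree
  · obtain rfl := (Finsupp.degree_eq_zero_iff d).1 h
    simpa [← constantCoeff_eq] using hP0 i
  · obtain ⟨j, rfl⟩ : d ∈ Set.range fun j => Finsupp.single j 1 :=
      Finsupp.range_single_one ▸ h
    simp [Matrix.toMvPolynomial, coeff_sum, coeff_monomial, linPart,
      Finsupp.single_left_inj one_ne_zero]

theorem bind₁_injective_of_isUnit_det {n : ℕ} {P : Fin n → MvPolynomial (Fin n) ℝ}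
    (hP0 : IsPolySelfMap P) (hlin : IsUnit (linPart P).det) : Function.Injective (bind₁ P) := by
  -- Substituting the inverse linear part `A` normalises the linear part to the identity.
  set A := (linPart P)⁻¹
  suffices Function.Injective (bind₁ A.toMvPolynomial ∘ bind₁ P) from this.of_comp
  rw [← AlgHom.coe_comp, bind₁_comp_bind₁]
  refine bind₁_injective_of_sub_X_mem fun i => ?_
  have hX : X i = bind₁ A.toMvPolynomial ((linPart P).toMvPolynomial i) := by
    rw [← Matrix.toMvPolynomial_mul, Matrix.mul_nonsing_inv _ hlin, Matrix.toMvPolynomial_one]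
  rw [hX, ← map_sub]
  exact bind₁_mem_weightAtLeast (fun j => (A.toMvPolynomial_isHomogeneous j).mem_weightAtLeast)
    (sub_toMvPolynomial_linPart_mem_weightAtLeast hP0 i)

theorem leftInverse_evalMap_of_bind₁_eq_X {n : ℕ} {P Q : Fin n → MvPolynomial (Fin n) ℝ}
    (h : ∀ i, bind₁ P (Q i) = X i) : Function.LeftInverse (evalMap Q) (evalMap P) :=
  fun x => _root_.funext fun i => by
    have := congr(eval x $(h i))
    rwa [eval_X, eval, eval₂Hom_bind₁] at this

theorem defect_nonpos_iff {n : ℕ} {w : Fin n → ℝ} {i : Fin n} {d : Fin n →₀ ℕ} :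
    defect w i d ≤ 0 ↔ w i ≤ Finsupp.weight w d := by
  simp [defect, Finsupp.weight_eq_sum, nsmul_eq_mul]

theorem subresonanceDefects_iff {n : ℕ} {w : Fin n → ℝ}
    {P : Fin n → MvPolynomial (Fin n) ℝ} :
    SubresonanceDefects w P ↔ ∀ i, P i ∈ weightAtLeast ℝ w (w i) := by
  simp only [SubresonanceDefects, mem_weightAtLeast, defect_nonpos_iff]

theorem subresonance_inverse_general (n : ℕ) (w : Fin n → ℝ)
    (hw : ∀ j, w j < 0) (P : Fin n → MvPolynomial (Fin n) ℝ)
    (hP0 : IsPolySelfMap P) (hP : SubresonanceDefects w P)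
    (hlin : IsUnit (linPart P).det) :
    Function.Bijective (evalMap P) ∧
    ∃ Q : Fin n → MvPolynomial (Fin n) ℝ,
      IsPolySelfMap Q ∧ SubresonanceDefects w Q ∧
      Function.LeftInverse (evalMap Q) (evalMap P) ∧
      Function.RightInverse (evalMap Q) (evalMap P) := by
  rw [subresonanceDefects_iff] at hP
  have hinj := bind₁_injective_of_isUnit_det hP0 hlin
  choose Q hQ hPQ using fun i =>
    exists_bind₁_eq_of_injective hw hP hinj (X_mem_weightAtLeast w i)
  have hleft : Function.LeftInverse (evalMap Q) (evalMap P) :=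
    leftInverse_evalMap_of_bind₁_eq_X hPQ
  have hright : Function.RightInverse (evalMap Q) (evalMap P) :=
    leftInverse_evalMap_of_bind₁_eq_X (bind₁_eq_X_of_injective hinj hPQ)
  refine ⟨⟨hleft.injective, hright.surjective⟩, Q, fun i => ?_, subresonanceDefects_iff.2 hQ,
    hleft, hright⟩
  rw [← constantCoeff_bind₁ hP0, hPQ, constantCoeff_X]

/-- Every subresonance polynomial self-map `P` of `ℝ^n` whose linear part
is invertible is a bijection of `ℝ^n`, and its inverse is again (induced by) a
subresonance polynomial self-map of `ℝ^n`. -/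
theorem subresonance_inverse (n : ℕ) (hn : 1 ≤ n) (w : Fin n → ℝ)
    (hw : ∀ j, w j < 0) (P : Fin n → MvPolynomial (Fin n) ℝ)
    (hP0 : IsPolySelfMap P) (hP : SubresonanceDefects w P)
    (hlin : IsUnit (linPart P).det) :
    Function.Bijective (evalMap P) ∧
    ∃ Q : Fin n → MvPolynomial (Fin n) ℝ,
      IsPolySelfMap Q ∧ SubresonanceDefects w Q ∧
      Function.LeftInverse (evalMap Q) (evalMap P) ∧
      Function.RightInverse (evalMap Q) (evalMap P) :=
  subresonance_inverse_general n w hw P hP0 hP hlin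
end

section
/- If P is a resonance polynomial self-map of ℝ^n whose linear part is invertible, then P is a bijection of ℝ^n and its inverse is (induced by) a resonance polynomial self-map of ℝ^n. -/
open MvPolynomial

/-- `P` is resonance: every monomial occurring with nonzero coefficient in
each component has defect `= 0`. -/
def ResonanceDefects {n : ℕ} (w : Fin n → ℝ)
    (P : Fin n → MvPolynomial (Fin n) ℝ) : Prop :=
  ∀ i, ∀ d ∈ (P i).support, defect w i d = 0

/-! Resonance says exactly that each component `P i` is weighted homogeneous of weight `w i`.
As all weights are negative, a monomial of weight `w i` is either a single variable of weight
`w i` or involves only variables of strictly larger weight; so the linear part `L` only couples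
variables of equal weight, and so does `L⁻¹`. Hence the frozen-derivative Newton map
`x ↦ x + L⁻¹ (y - P x) = L⁻¹ (y - (P x - L x))` is triangular for the weights: each coordinate
of the image depends only on coordinates of strictly larger weight. Its `n`-th iterate from any
point is therefore its unique fixed point, the unique solution of `P x = y`. Running the same
iteration on polynomial maps from `0` produces the inverse `Q`, and every step preserves weighted
homogeneity, so `Q` is again resonance. -/

namespace Function

variable {ι α β : Type*} [Preorder β] (w : ι → β)

def DependsOnlyAbove (T : (ι → α) → ι → α) : Prop :=
  ∀ x x' i, (∀ k, w i < w k → x k = x' k) → T x i = T x' i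

noncomputable def numAbove (i : ι) : ℕ := {k | w i < w k}.ncard

variable [Finite ι] {w}

lemma numAbove_lt_numAbove {i k : ι} (h : w i < w k) : numAbove w k < numAbove w i :=
  Set.ncard_lt_ncard ⟨fun _ hl => h.trans hl, fun hsub => lt_irrefl _ (hsub h)⟩

lemma numAbove_lt_card (i : ι) : numAbove w i < Nat.card ι :=
  Set.ncard_lt_card fun h => lt_irrefl (w i) (h ▸ Set.mem_univ i : i ∈ {k | w i < w k})

namespace DependsOnlyAbove

variable {T : (ι → α) → ι → α}

lemma iterate_succ_apply_eq (hT : DependsOnlyAbove w T) (x : ι → α) :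
    ∀ m k, numAbove w k < m → T^[m + 1] x k = T^[m] x k := by
  intro m
  induction m with
  | zero => intro k hk; omega
  | succ m ih =>
    intro k hk
    rw [iterate_succ_apply', iterate_succ_apply' T m]
    refine hT _ _ k fun l hl => ?_
    rw [← iterate_succ_apply' T m]
    exact ih l (by have := numAbove_lt_numAbove hl; omega)

lemma isFixedPt_iterate (hT : DependsOnlyAbove w T) (x : ι → α) {m : ℕ} (hm : Nat.card ι ≤ m) :
    IsFixedPt T (T^[m] x) := by
  funext k
  rw [← iterate_succ_apply' T m]
  exact hT.iterate_succ_apply_eq x m k ((numAbove_lt_card k).trans_le hm)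

lemma eq_of_isFixedPt (hT : DependsOnlyAbove w T) {x x' : ι → α} (hx : IsFixedPt T x)
    (hx' : IsFixedPt T x') : x = x' := by
  funext k
  induction hk : numAbove w k using Nat.strong_induction_on generalizing k with
  | _ r ih =>
    rw [← hx, ← hx']
    exact hT x x' k fun l hl => ih _ (hk ▸ numAbove_lt_numAbove hl) l rfl

end DependsOnlyAbove

end Function

namespace Finsupp

variable {σ M : Type*} [AddCommMonoid M] [PartialOrder M] [IsOrderedCancelAddMonoid M]
  {w : σ → M}

lemma weight_neg_of_ne_zero (hw : ∀ i, w i < 0) {e : σ →₀ ℕ} (he : e ≠ 0) : weight w e < 0 := by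
  rw [weight_apply, Finsupp.sum]
  refine Finset.sum_neg (fun i hi => nsmul_neg (hw i) (mem_support_iff.mp hi)) ?_
  exact Finsupp.support_nonempty_iff.mpr he

lemma weight_lt_of_ne_single (hw : ∀ i, w i < 0) {d : σ →₀ ℕ} {k : σ} (hk : d k ≠ 0)
    (hd : d ≠ single k 1) : weight w d < w k := by
  have hle : single k 1 ≤ d := single_le_iff.mpr (Nat.one_le_iff_ne_zero.mpr hk)
  have hsplit : d = (d - single k 1) + single k 1 := (tsub_add_cancel_of_le hle).symm
  have hne : d - single k 1 ≠ 0 := fun h0 => hd (by rw [hsplit, h0, zero_add])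
  rw [hsplit, map_add, weight_single, one_smul]
  simpa using add_lt_add_right (weight_neg_of_ne_zero hw hne) (w k)

end Finsupp

namespace MvPolynomial

variable {σ τ R M : Type*} [CommSemiring R] [AddCommMonoid M]

theorem IsWeightedHomogeneous.bind₁ {w : σ → M} {v : τ → M} {G : σ → MvPolynomial τ R}
    (hG : ∀ s, (G s).IsWeightedHomogeneous v (w s)) {p : MvPolynomial σ R} {m : M}
    (hp : p.IsWeightedHomogeneous w m) : (bind₁ G p).IsWeightedHomogeneous v m := by
  rw [p.as_sum, map_sum]
  refine IsWeightedHomogeneous.sum _ _ _ fun d hd => ?_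
  have hweight : ∑ s ∈ d.support, d s • w s = m := by
    rw [← hp (mem_support_iff.mp hd), Finsupp.weight_apply, Finsupp.sum]
  rw [bind₁_monomial, ← hweight]
  exact (IsWeightedHomogeneous.prod _ _ _ fun s _ => (hG s).pow (d s)).C_mul _

end MvPolynomial

namespace Matrix

variable {ι R : Type*} [Fintype ι] [DecidableEq ι]

lemma commute_diagonal_iff [CommRing R] [NoZeroDivisors R] {v : ι → R} {A : Matrix ι ι R} :
    Commute (diagonal v) A ↔ ∀ i j, A i j ≠ 0 → v i = v j := by
  simp only [Commute, SemiconjBy, ← Matrix.ext_iff, diagonal_mul, mul_diagonal]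
  refine forall₂_congr fun i j => ?_
  rw [mul_comm, ← sub_eq_zero, ← mul_sub, mul_eq_zero, sub_eq_zero, or_iff_not_imp_left]

lemma eq_of_inv_apply_ne_zero [Field R] {v : ι → R} {A : Matrix ι ι R}
    (hA : ∀ i j, A i j ≠ 0 → v i = v j) {i j : ι} (h : A⁻¹ i j ≠ 0) : v i = v j := by
  have hcomm : Commute (diagonal v) A⁻¹ := by
    simpa using Matrix.Commute.zpow_right (commute_diagonal_iff.mpr hA) (-1)
  exact commute_diagonal_iff.mp hcomm i j h

end Matrix

open Function Matrix

variable {n : ℕ} {w : Fin n → ℝ} {P : Fin n → MvPolynomial (Fin n) ℝ}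

lemma defect_eq_sub_weight (i : Fin n) (d : Fin n →₀ ℕ) :
    defect w i d = w i - Finsupp.weight w d := by
  rw [defect, Finsupp.weight_apply, Finsupp.sum_fintype _ _ (by simp)]
  simp only [nsmul_eq_mul]

lemma resonanceDefects_iff :
    ResonanceDefects w P ↔ ∀ i, (P i).IsWeightedHomogeneous w (w i) := by
  simp only [ResonanceDefects, IsWeightedHomogeneous, mem_support_iff, defect_eq_sub_weight,
    sub_eq_zero]
  exact forall_congr' fun i => ⟨fun h d hd => (h d hd).symm, fun h d hd => (h hd).symm⟩

lemma weight_eq_of_linPart_ne_zero (hP : ∀ i, (P i).IsWeightedHomogeneous w (w i)) {i j : Fin n}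
    (h : linPart P i j ≠ 0) : w i = w j := by
  simpa [Finsupp.weight_single] using (hP i h).symm

lemma weight_eq_of_linPart_inv_ne_zero (hP : ∀ i, (P i).IsWeightedHomogeneous w (w i))
    {i j : Fin n} (h : (linPart P)⁻¹ i j ≠ 0) : w i = w j :=
  eq_of_inv_apply_ne_zero (fun _ _ hL => weight_eq_of_linPart_ne_zero hP hL) h

noncomputable def nonlinPart (P : Fin n → MvPolynomial (Fin n) ℝ) (i : Fin n) :
    MvPolynomial (Fin n) ℝ :=
  P i - ∑ k, C (linPart P i k) * X k

lemma eval_nonlinPart (x : Fin n → ℝ) (i : Fin n) :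
    eval x (nonlinPart P i) = evalMap P x i - (linPart P *ᵥ x) i := by
  simp [nonlinPart, evalMap, mulVec, dotProduct]

lemma coeff_nonlinPart (i : Fin n) (d : Fin n →₀ ℕ) :
    coeff d (nonlinPart P i) = if ∃ k, Finsupp.single k 1 = d then 0 else coeff d (P i) := by
  classical
  simp only [nonlinPart, coeff_sub, coeff_sum, coeff_C_mul, coeff_X, mul_ite, mul_one, mul_zero]
  split_ifs with h
  · obtain ⟨k, rfl⟩ := h
    simp [Finsupp.single_left_inj one_ne_zero, linPart]
  · simp only [not_exists] at h
    simp [h]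

lemma lt_of_coeff_nonlinPart_ne_zero (hw : ∀ j, w j < 0)
    (hP : ∀ i, (P i).IsWeightedHomogeneous w (w i)) {i k : Fin n} {d : Fin n →₀ ℕ}
    (hd : coeff d (nonlinPart P i) ≠ 0) (hk : d k ≠ 0) : w i < w k := by
  rw [coeff_nonlinPart] at hd
  split_ifs at hd with hsingle
  · exact absurd rfl hd
  · rw [← hP i hd]
    exact Finsupp.weight_lt_of_ne_single hw hk fun h => hsingle ⟨k, h.symm⟩

lemma eval_nonlinPart_congr (hw : ∀ j, w j < 0)
    (hP : ∀ i, (P i).IsWeightedHomogeneous w (w i)) {i : Fin n} {x x' : Fin n → ℝ}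
    (hx : ∀ k, w i < w k → x k = x' k) : eval x (nonlinPart P i) = eval x' (nonlinPart P i) :=
  eval₂_congr _ _ _ fun {k _} hk hd =>
    hx k (lt_of_coeff_nonlinPart_ne_zero hw hP hd (Finsupp.mem_support_iff.mp hk))

/-- Newton's iteration for `P x = y`, with the derivative frozen at the origin. -/
noncomputable def newtonMap (P : Fin n → MvPolynomial (Fin n) ℝ) (y x : Fin n → ℝ) :
    Fin n → ℝ :=
  x + (linPart P)⁻¹ *ᵥ (y - evalMap P x)

/-- The same iteration on polynomial maps, solving `P ∘ Q = id`. -/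
noncomputable def newtonStep (P Q : Fin n → MvPolynomial (Fin n) ℝ) :
    Fin n → MvPolynomial (Fin n) ℝ :=
  fun i => Q i + ∑ j, C ((linPart P)⁻¹ i j) * (X j - bind₁ Q (P j))

lemma newtonMap_eq (hlin : IsUnit (linPart P).det) (y x : Fin n → ℝ) :
    newtonMap P y x = (linPart P)⁻¹ *ᵥ (y - fun j => eval x (nonlinPart P j)) := by
  have hN : (fun j => eval x (nonlinPart P j)) = evalMap P x - linPart P *ᵥ x :=
    funext fun j => eval_nonlinPart x j
  rw [hN, newtonMap, sub_sub_eq_add_sub, add_sub_right_comm, mulVec_add, mulVec_mulVec,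
    nonsing_inv_mul _ hlin, one_mulVec, add_comm]

lemma dependsOnlyAbove_newtonMap (hw : ∀ j, w j < 0)
    (hP : ∀ i, (P i).IsWeightedHomogeneous w (w i)) (hlin : IsUnit (linPart P).det)
    (y : Fin n → ℝ) : DependsOnlyAbove w (newtonMap P y) := by
  intro x x' i hx
  simp only [newtonMap_eq hlin, mulVec, dotProduct, Pi.sub_apply]
  refine Finset.sum_congr rfl fun j _ => ?_
  by_cases hij : (linPart P)⁻¹ i j = 0
  · simp [hij]
  · rw [eval_nonlinPart_congr hw hP ((weight_eq_of_linPart_inv_ne_zero hP hij) ▸ hx)]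

lemma isFixedPt_newtonMap_iff (hlin : IsUnit (linPart P).det) {y x : Fin n → ℝ} :
    IsFixedPt (newtonMap P y) x ↔ evalMap P x = y := by
  rw [IsFixedPt, newtonMap, add_eq_left]
  constructor
  · intro h
    have h' := congrArg (linPart P *ᵥ ·) h
    simp only [mulVec_mulVec, mul_nonsing_inv _ hlin, one_mulVec, mulVec_zero] at h'
    exact (sub_eq_zero.mp h').symm
  · intro h
    rw [h, sub_self, mulVec_zero]

lemma evalMap_newtonStep (Q : Fin n → MvPolynomial (Fin n) ℝ) (y : Fin n → ℝ) :
    evalMap (newtonStep P Q) y = newtonMap P y (evalMap Q y) := by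
  have hbind : ∀ p, eval y (bind₁ Q p) = eval (evalMap Q y) p := fun p => eval₂Hom_bind₁ _ _ _ _
  funext i
  simp [newtonStep, newtonMap, evalMap, mulVec, dotProduct, hbind]

lemma evalMap_iterate_newtonStep (Q : Fin n → MvPolynomial (Fin n) ℝ) (y : Fin n → ℝ) (m : ℕ) :
    evalMap ((newtonStep P)^[m] Q) y = (newtonMap P y)^[m] (evalMap Q y) := by
  induction m with
  | zero => rfl
  | succ m ih => rw [iterate_succ_apply', iterate_succ_apply', evalMap_newtonStep, ih]

lemma isWeightedHomogeneous_newtonStep (hP : ∀ i, (P i).IsWeightedHomogeneous w (w i))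
    {Q : Fin n → MvPolynomial (Fin n) ℝ} (hQ : ∀ i, (Q i).IsWeightedHomogeneous w (w i))
    (i : Fin n) :
    (newtonStep P Q i).IsWeightedHomogeneous w (w i) := by
  refine (hQ i).add (IsWeightedHomogeneous.sum _ _ _ fun j _ => ?_)
  by_cases hij : (linPart P)⁻¹ i j = 0
  · simpa [hij] using isWeightedHomogeneous_zero ℝ w (w i)
  · rw [weight_eq_of_linPart_inv_ne_zero hP hij]
    exact ((isWeightedHomogeneous_X ℝ w j).sub ((hP j).bind₁ hQ)).C_mul _

lemma isWeightedHomogeneous_iterate_newtonStep (hP : ∀ i, (P i).IsWeightedHomogeneous w (w i))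
    (m : ℕ) (i : Fin n) : ((newtonStep P)^[m] 0 i).IsWeightedHomogeneous w (w i) :=
  Iterate.rec (fun Q : Fin n → MvPolynomial (Fin n) ℝ =>
      ∀ i, (Q i).IsWeightedHomogeneous w (w i))
    (fun i => isWeightedHomogeneous_zero ℝ w (w i))
    (fun _ => isWeightedHomogeneous_newtonStep hP) m i

theorem resonance_inverse_general (n : ℕ) (w : Fin n → ℝ)
    (hw : ∀ j, w j < 0) (P : Fin n → MvPolynomial (Fin n) ℝ)
    (hP : ResonanceDefects w P)
    (hlin : IsUnit (linPart P).det) :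
    Function.Bijective (evalMap P) ∧
    ∃ Q : Fin n → MvPolynomial (Fin n) ℝ,
      IsPolySelfMap Q ∧ ResonanceDefects w Q ∧
      Function.LeftInverse (evalMap Q) (evalMap P) ∧
      Function.RightInverse (evalMap Q) (evalMap P) := by
  have hPhom := resonanceDefects_iff.mp hP
  set Q := (newtonStep P)^[n] 0
  have hQhom : ∀ i, (Q i).IsWeightedHomogeneous w (w i) :=
    isWeightedHomogeneous_iterate_newtonStep hPhom n
  have hT := dependsOnlyAbove_newtonMap hw hPhom hlin
  have hright : RightInverse (evalMap Q) (evalMap P) := fun y => by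
    rw [← isFixedPt_newtonMap_iff hlin, evalMap_iterate_newtonStep]
    exact (hT y).isFixedPt_iterate _ (Nat.card_fin n).le
  have hleft : LeftInverse (evalMap Q) (evalMap P) := fun x =>
    (hT (evalMap P x)).eq_of_isFixedPt ((isFixedPt_newtonMap_iff hlin).mpr (hright _))
      ((isFixedPt_newtonMap_iff hlin).mpr rfl)
  refine ⟨⟨hleft.injective, hright.surjective⟩, Q, fun i => ?_, resonanceDefects_iff.mpr hQhom,
    hleft, hright⟩
  rw [constantCoeff_eq]
  exact (hQhom i).coeff_eq_zero 0 (by simpa using (hw i).ne')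

/-- If `P` is a resonance polynomial self-map of `ℝ^n` whose linear part
is invertible, then `P` is a bijection of `ℝ^n` and its inverse is (induced by) a
resonance polynomial self-map of `ℝ^n`. -/
theorem resonance_inverse (n : ℕ) (hn : 1 ≤ n) (w : Fin n → ℝ)
    (hw : ∀ j, w j < 0) (P : Fin n → MvPolynomial (Fin n) ℝ)
    (hP0 : IsPolySelfMap P) (hP : ResonanceDefects w P)
    (hlin : IsUnit (linPart P).det) :
    Function.Bijective (evalMap P) ∧
    ∃ Q : Fin n → MvPolynomial (Fin n) ℝ,
      IsPolySelfMap Q ∧ ResonanceDefects w Q ∧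
      Function.LeftInverse (evalMap Q) (evalMap P) ∧
      Function.RightInverse (evalMap Q) (evalMap P) :=
  resonance_inverse_general n w hw P hP hlin
end

section
/- Let N be a natural number with N ≥ wmin/wmax. Then any left-nested iterated Lie bracket [X_N, [X_{N−1}, …, [X_2, X_1]…]] of N strictly subresonance polynomial self-maps X_1, …, X_N of ℝ^n is the zero tuple. In particular, the strictly subresonance polynomial self-maps form a nilpotent Lie algebra under the bracket. -/
open MvPolynomial

/-- The minimum of the weights `w : Fin n → ℝ` (for `n ≥ 1`). -/
noncomputable def wmin {n : ℕ} (hn : 1 ≤ n) (w : Fin n → ℝ) : ℝ :=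
  Finset.univ.inf' (Finset.univ_nonempty_iff.mpr ⟨⟨0, hn⟩⟩) w

/-- The maximum of the weights `w : Fin n → ℝ` (for `n ≥ 1`). -/
noncomputable def wmax {n : ℕ} (hn : 1 ≤ n) (w : Fin n → ℝ) : ℝ :=
  Finset.univ.sup' (Finset.univ_nonempty_iff.mpr ⟨⟨0, hn⟩⟩) w

/-- The Lie bracket of two `n`-tuples of polynomials (viewed as polynomial
vector fields): the `i`-th component of `[X, Y]` is
`Σ_j (X j · ∂_j(Y i) − Y j · ∂_j(X i))`. -/
noncomputable def polyBracket {n : ℕ} (X Y : Fin n → MvPolynomial (Fin n) ℝ) :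
    Fin n → MvPolynomial (Fin n) ℝ :=
  fun i => ∑ j, (X j * MvPolynomial.pderiv j (Y i) - Y j * MvPolynomial.pderiv j (X i))

/-- The left-nested iterated Lie bracket `[X_N, [X_{N−1}, …, [X_2, X_1]…]]`. -/
noncomputable def nestedBracket {n : ℕ} (X : ℕ → Fin n → MvPolynomial (Fin n) ℝ) :
    ℕ → Fin n → MvPolynomial (Fin n) ℝ
  | 0 => fun _ => 0
  | 1 => X 1
  | (k+2) => polyBracket (X (k+2)) (nestedBracket X (k+1))

/-!
The defect is additive under the bracket: a monomial of `X j * ∂_j (Y i)` comes from a monomial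
`u` of `X j` and a monomial `v + e_j` of `Y i`, and its defect in component `i` is the sum of
their defects. Hence an `N`-fold nested bracket of strictly subresonance fields has all defects
`≤ N * wmax ≤ wmin`. Since all weights are negative, every nonconstant monomial in component `i`
has defect `> w i ≥ wmin`, and constant terms never appear, so the bracket vanishes.
-/

lemma MvPolynomial.add_single_mem_support_of_mem_support_pderiv {σ R : Type*} [CommSemiring R]
    {p : MvPolynomial σ R} {j : σ} {v : σ →₀ ℕ} (hv : v ∈ (pderiv j p).support) :
    v + Finsupp.single j 1 ∈ p.support := by
  rw [mem_support_iff, coeff_pderiv] at *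
  exact left_ne_zero_of_mul hv

section Defect

variable {n : ℕ} (w : Fin n → ℝ)

def DefectLE (c : ℝ) (X : Fin n → MvPolynomial (Fin n) ℝ) : Prop :=
  ∀ i, ∀ d ∈ (X i).support, defect w i d ≤ c

lemma defect_add (i j : Fin n) (u v : Fin n →₀ ℕ) :
    defect w i (u + v) = defect w j u + defect w i (v + Finsupp.single j 1) := by
  simp only [defect, Finsupp.add_apply, Finsupp.single_apply, Nat.cast_add, add_mul,
    Finset.sum_add_distrib, Nat.cast_ite, Nat.cast_one, Nat.cast_zero, ite_mul, one_mul,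
    zero_mul, Finset.sum_ite_eq, Finset.mem_univ, if_true]
  ring

lemma defect_le_of_mem_support_mul_pderiv {a b : ℝ} {i j : Fin n}
    {p q : MvPolynomial (Fin n) ℝ} (hp : ∀ d ∈ p.support, defect w j d ≤ a)
    (hq : ∀ d ∈ q.support, defect w i d ≤ b) {d : Fin n →₀ ℕ}
    (hd : d ∈ (p * pderiv j q).support) : defect w i d ≤ a + b := by
  classical
  obtain ⟨u, hu, v, hv, rfl⟩ := Finset.mem_add.mp (support_mul _ _ hd)
  rw [defect_add w i j u v]
  exact add_le_add (hp u hu) (hq _ (add_single_mem_support_of_mem_support_pderiv hv))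

lemma DefectLE.polyBracket {a b : ℝ} {X Y : Fin n → MvPolynomial (Fin n) ℝ}
    (hX : DefectLE w a X) (hY : DefectLE w b Y) : DefectLE w (a + b) (polyBracket X Y) := by
  intro i d hd
  obtain ⟨j, -, hj⟩ := Finset.mem_biUnion.mp (support_sum hd)
  rcases Finset.mem_union.mp (support_sub _ _ _ hj) with h | h
  · exact defect_le_of_mem_support_mul_pderiv w (hX j) (hY i) h
  · exact add_comm a b ▸ defect_le_of_mem_support_mul_pderiv w (hY j) (hX i) h

lemma lt_defect_of_ne_zero (hw : ∀ j, w j < 0) (i : Fin n) {d : Fin n →₀ ℕ} (hd : d ≠ 0) :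
    w i < defect w i d := by
  obtain ⟨j, hj⟩ := Finsupp.ne_iff.mp hd
  have hsum : ∑ k, (d k : ℝ) * w k < 0 :=
    Finset.sum_neg' (fun k _ => mul_nonpos_of_nonneg_of_nonpos (Nat.cast_nonneg _) (hw k).le)
      ⟨j, Finset.mem_univ j,
        mul_neg_of_pos_of_neg (by exact_mod_cast Nat.pos_of_ne_zero hj) (hw j)⟩
  rw [defect]
  linarith

lemma eq_zero_of_defect_le (hw : ∀ j, w j < 0) (i : Fin n) {p : MvPolynomial (Fin n) ℝ}
    (h0 : constantCoeff p = 0) (h : ∀ d ∈ p.support, defect w i d ≤ w i) : p = 0 := by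
  rw [← support_eq_empty, Finset.eq_empty_iff_forall_notMem]
  intro d hd
  have hd0 : d ≠ 0 := by
    rintro rfl
    exact mem_support_iff.mp hd (by rwa [← constantCoeff_eq])
  exact (h d hd).not_gt (lt_defect_of_ne_zero w hw i hd0)

end Defect

section NestedBracket

variable {n : ℕ} (X : ℕ → Fin n → MvPolynomial (Fin n) ℝ)

lemma constantCoeff_polyBracket {Y Z : Fin n → MvPolynomial (Fin n) ℝ}
    (hY : ∀ i, constantCoeff (Y i) = 0) (hZ : ∀ i, constantCoeff (Z i) = 0) (i : Fin n) :
    constantCoeff (polyBracket Y Z i) = 0 := by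
  simp [polyBracket, hY, hZ]

lemma nestedBracket_succ {k : ℕ} (hk : 1 ≤ k) :
    nestedBracket X (k + 1) = polyBracket (X (k + 1)) (nestedBracket X k) := by
  obtain ⟨m, rfl⟩ := Nat.exists_eq_add_of_le' hk
  rfl

lemma constantCoeff_nestedBracket {N : ℕ} (hN : 1 ≤ N)
    (hX : ∀ k, 1 ≤ k → k ≤ N → ∀ i, constantCoeff (X k i) = 0) (i : Fin n) :
    constantCoeff (nestedBracket X N i) = 0 := by
  induction N, hN using Nat.le_induction generalizing i with
  | base => exact hX 1 le_rfl le_rfl i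
  | succ k hk ih =>
    rw [nestedBracket_succ X hk]
    exact constantCoeff_polyBracket (hX (k + 1) (by omega) le_rfl)
      (ih fun m hm hmk => hX m hm (by omega)) i

lemma defectLE_nestedBracket (w : Fin n → ℝ) {c : ℝ} {N : ℕ} (hN : 1 ≤ N)
    (hX : ∀ k, 1 ≤ k → k ≤ N → DefectLE w c (X k)) :
    DefectLE w (N * c) (nestedBracket X N) := by
  induction N, hN using Nat.le_induction with
  | base =>
    rw [Nat.cast_one, one_mul]
    exact hX 1 le_rfl le_rfl
  | succ k hk ih =>
    rw [nestedBracket_succ X hk, Nat.cast_succ, add_one_mul, add_comm]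
    exact (hX (k + 1) (by omega) le_rfl).polyBracket w (ih fun m hm hmk => hX m hm (by omega))

end NestedBracket

/-- If `N ≥ wmin/wmax`, then any left-nested iterated Lie bracket
`[X_N, [X_{N−1}, …, [X_2, X_1]…]]` of `N` strictly subresonance polynomial
self-maps `X_1, …, X_N` of `ℝ^n` is the zero tuple (so the strictly subresonance
polynomial self-maps form a nilpotent Lie algebra under the bracket). -/
theorem strict_subresonance_nested_bracket_eq_zero (n : ℕ) (hn : 1 ≤ n)
    (w : Fin n → ℝ) (hw : ∀ j, w j < 0) (N : ℕ)
    (hN : wmin hn w / wmax hn w ≤ (N : ℝ))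
    (X : ℕ → Fin n → MvPolynomial (Fin n) ℝ)
    (hX0 : ∀ k, 1 ≤ k → k ≤ N → ∀ i, MvPolynomial.constantCoeff (X k i) = 0)
    (hX : ∀ k, 1 ≤ k → k ≤ N →
      ∀ i, ∀ d ∈ (X k i).support, defect w i d ≤ wmax hn w) :
    nestedBracket X N = fun _ => 0 := by
  rcases Nat.eq_zero_or_pos N with rfl | hN1
  · rfl
  have hwmax : wmax hn w < 0 := (Finset.sup'_lt_iff _).mpr fun j _ => hw j
  have hdefect := defectLE_nestedBracket X w hN1 hX
  funext i
  refine eq_zero_of_defect_le w hw i (constantCoeff_nestedBracket X hN1 hX0 i) fun d hd => ?_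
  calc defect w i d ≤ N * wmax hn w := hdefect i d hd
    _ ≤ wmin hn w := (div_le_iff_of_neg hwmax).mp hN
    _ ≤ w i := Finset.inf'_le _ (Finset.mem_univ i)
end
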